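/- arXiv:1408.5363 — 2 statements merged into one kernel-verified Lean document; each statement's English description precedes it below -/
import Mathlib

section
/- For all nonzero vectors ξ, η ∈ ℝ³ and each index j ∈ {1,2,3}, the symbol q₀ⱼ(ξ,η) = −⟨ξ⟩ηⱼ + ξⱼ⟨η⟩ satisfies |q₀ⱼ(ξ,η)| ≲ |ξ||η|θ(ξ,η) + |ξ|/⟨η⟩ + |η|/⟨ξ⟩, where θ(ξ,η) is the angle between ξ and η. -/
noncomputable def jb (ξ : EuclideanSpace ℝ (Fin 3)) : ℝ := Real.sqrt (1 + ‖ξ‖ ^ 2)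

/-!
Split `ξⱼ⟨η⟩ - ⟨ξ⟩ηⱼ = ξⱼ(⟨η⟩ - |η|) + (|η|ξ - |ξ|η)ⱼ - ηⱼ(⟨ξ⟩ - |ξ|)`. The outer terms are small
because `0 ≤ ⟨x⟩ - |x| = 1 / (⟨x⟩ + |x|) ≤ 1 / ⟨x⟩`. The middle one is `|ξ||η|` times the chord
between the unit vectors `ξ/|ξ|` and `η/|η|`, which is at most the arc `θ` since `2 - 2 cos θ ≤ θ²`.
So the inequality holds with `C = 1`.
-/

open InnerProductGeometry

theorem abs_sqrt_one_add_sq_sub_self_le {x : ℝ} (hx : 0 ≤ x) :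
    |√(1 + x ^ 2) - x| ≤ 1 / √(1 + x ^ 2) := by
  set s := √(1 + x ^ 2)
  have hs : s ^ 2 = 1 + x ^ 2 := Real.sq_sqrt (by positivity)
  have hxs : x < s := Real.lt_sqrt_of_sq_lt (by linarith)
  have hprod : (s - x) * (s + x) = 1 := by linear_combination hs
  rw [abs_of_pos (sub_pos.mpr hxs), le_div_iff₀ (by linarith)]
  nlinarith

theorem norm_smul_sub_smul_le_mul_angle {V : Type*} [NormedAddCommGroup V]
    [InnerProductSpace ℝ V] (x y : V) :
    ‖‖y‖ • x - ‖x‖ • y‖ ≤ ‖x‖ * ‖y‖ * angle x y := by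
  have hsq : ‖‖y‖ • x - ‖x‖ • y‖ ^ 2 = 2 * (‖x‖ * ‖y‖) ^ 2 * (1 - Real.cos (angle x y)) := by
    rw [norm_sub_sq_real, norm_smul, norm_smul, real_inner_smul_left, real_inner_smul_right,
      ← cos_angle_mul_norm_mul_norm]
    simp only [Real.norm_eq_abs, abs_norm]
    ring
  refine le_of_pow_le_pow_left₀ two_ne_zero (mul_nonneg (by positivity) (angle_nonneg x y)) ?_
  calc ‖‖y‖ • x - ‖x‖ • y‖ ^ 2 = 2 * (‖x‖ * ‖y‖) ^ 2 * (1 - Real.cos (angle x y)) := hsq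
    _ ≤ 2 * (‖x‖ * ‖y‖) ^ 2 * (angle x y ^ 2 / 2) := by
      gcongr; linarith [Real.one_sub_sq_div_two_le_cos (x := angle x y)]
    _ = (‖x‖ * ‖y‖ * angle x y) ^ 2 := by ring

theorem stmt1 :
    ∃ C : ℝ, 0 < C ∧ ∀ ξ η : EuclideanSpace ℝ (Fin 3), ξ ≠ 0 → η ≠ 0 → ∀ j : Fin 3,
      |(-(jb ξ * η j) + ξ j * jb η)| ≤
        C * (‖ξ‖ * ‖η‖ * InnerProductGeometry.angle ξ η + ‖ξ‖ / jb η + ‖η‖ / jb ξ) := by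
  refine ⟨1, one_pos, fun ξ η _ _ j => ?_⟩
  have hcoord (w : EuclideanSpace ℝ (Fin 3)) : |w j| ≤ ‖w‖ := PiLp.norm_apply_le w j
  have hξ : |jb ξ - ‖ξ‖| ≤ 1 / jb ξ := abs_sqrt_one_add_sq_sub_self_le (norm_nonneg ξ)
  have hη : |jb η - ‖η‖| ≤ 1 / jb η := abs_sqrt_one_add_sq_sub_self_le (norm_nonneg η)
  calc |(-(jb ξ * η j) + ξ j * jb η)|
      = |ξ j * (jb η - ‖η‖) + (‖η‖ • ξ - ‖ξ‖ • η) j - η j * (jb ξ - ‖ξ‖)| := by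
        congr 1
        simp only [PiLp.sub_apply, PiLp.smul_apply, smul_eq_mul]
        ring
    _ ≤ |ξ j| * |jb η - ‖η‖| + ‖‖η‖ • ξ - ‖ξ‖ • η‖ + |η j| * |jb ξ - ‖ξ‖| := by
        rw [← abs_mul, ← abs_mul]
        grw [abs_sub, abs_add_le, hcoord]
    _ ≤ ‖ξ‖ * (1 / jb η) + ‖ξ‖ * ‖η‖ * angle ξ η + ‖η‖ * (1 / jb ξ) := by
        gcongr
        exacts [hcoord ξ, norm_smul_sub_smul_le_mul_angle ξ η, hcoord η]
    _ = 1 * (‖ξ‖ * ‖η‖ * angle ξ η + ‖ξ‖ / jb η + ‖η‖ / jb ξ) := by ring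
end

section
/- Let α, β, γ ∈ [0, 1/2]. Then for all pairs of signs (±, ±'), all τ, λ ∈ ℝ and all nonzero ξ, η ∈ ℝ³, there is a constant C (depending only on α, β, γ) such that θ(±ξ, ±'η) ≤ C[ (⟨||τ+λ|−|ξ+η||⟩/min(⟨ξ⟩,⟨η⟩))^α + (⟨−τ±|ξ|⟩/min(⟨ξ⟩,⟨η⟩))^β + (⟨−λ±'|η|⟩/min(⟨ξ⟩,⟨η⟩))^γ ]. -/
/-!
Write `A = ‖ξ‖`, `B = ‖η‖` and `θ` for the angle. Comparing `‖ξ + η‖² = A² + 2⟪ξ, η⟫ + B²`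
with `(±A ±' B)² = A² ± 2AB + B²` gives `A B (1 - cos θ) ≤ (A + B) · | |±A ±' B| - ‖ξ + η‖ |`,
and the last factor is at most the sum `W` of the three weights by the triangle inequality
through `τ + λ`. Since `1 - cos θ ≥ 2θ²/π²`, this yields `min(A, B) θ² ≤ π² W`; together with
`θ ≤ π` and `W ≥ 1` (which take care of small frequencies) it gives
`θ² ≤ 2π² min(1, W / min(⟨ξ⟩, ⟨η⟩))`. Finally `min(1, r) ≤ (r ^ α)²` for `α ≤ 1/2`, and
`min(1, ·)` is subadditive, so the square root of `min(1, ∑ rᵢ)` is dominated by `∑ rᵢ ^ αᵢ`.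
-/

noncomputable def jbR (x : ℝ) : ℝ := Real.sqrt (1 + x ^ 2)

open Real InnerProductGeometry

lemma one_le_jbR (x : ℝ) : 1 ≤ jbR x :=
  Real.one_le_sqrt.mpr (by nlinarith [sq_nonneg x])

lemma abs_le_jbR (x : ℝ) : |x| ≤ jbR x := by
  rw [← Real.sqrt_sq_eq_abs]
  exact Real.sqrt_le_sqrt (by linarith)

lemma jbR_le_one_add {x : ℝ} (hx : 0 ≤ x) : jbR x ≤ 1 + x :=
  (Real.sqrt_le_left (by linarith)).mpr (by nlinarith)

lemma jb_eq_jbR_norm (ξ : EuclideanSpace ℝ (Fin 3)) : jb ξ = jbR ‖ξ‖ := rfl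

section InnerProductSpace

variable {V : Type*} [NormedAddCommGroup V] [InnerProductSpace ℝ V]

lemma norm_mul_norm_mul_one_sub_cos_angle_smul_le {s₁ s₂ : ℝ} (h₁ : |s₁| = 1) (h₂ : |s₂| = 1)
    (x y : V) :
    ‖x‖ * ‖y‖ * (1 - cos (angle (s₁ • x) (s₂ • y))) ≤
      (‖x‖ + ‖y‖) * |(|s₁ * ‖x‖ + s₂ * ‖y‖| - ‖x + y‖)| := by
  set P := |s₁ * ‖x‖ + s₂ * ‖y‖|
  have hsq₁ : s₁ ^ 2 = 1 := by rw [← sq_abs, h₁, one_pow]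
  have hsq₂ : s₂ ^ 2 = 1 := by rw [← sq_abs, h₂, one_pow]
  have hcos : cos (angle (s₁ • x) (s₂ • y)) * (‖x‖ * ‖y‖) = s₁ * s₂ * inner ℝ x y := by
    have h := cos_angle_mul_norm_mul_norm (s₁ • x) (s₂ • y)
    rw [norm_smul, norm_smul, real_inner_smul_left, real_inner_smul_right, Real.norm_eq_abs,
      Real.norm_eq_abs, h₁, h₂] at h
    linear_combination h
  have hE : ‖x + y‖ ^ 2 = ‖x‖ ^ 2 + 2 * inner ℝ x y + ‖y‖ ^ 2 := norm_add_sq_real x y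
  have hP : P ^ 2 = ‖x‖ ^ 2 + 2 * (s₁ * s₂) * (‖x‖ * ‖y‖) + ‖y‖ ^ 2 := by
    rw [sq_abs]
    linear_combination ‖x‖ ^ 2 * hsq₁ + ‖y‖ ^ 2 * hsq₂
  have hPle : P ≤ ‖x‖ + ‖y‖ := by
    simpa only [abs_mul, h₁, h₂, one_mul, abs_norm] using abs_add_le (s₁ * ‖x‖) (s₂ * ‖y‖)
  have hEle : ‖x + y‖ ≤ ‖x‖ + ‖y‖ := norm_add_le x y
  have hdiff : 2 * (‖x‖ * ‖y‖ * (1 - cos (angle (s₁ • x) (s₂ • y)))) =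
      s₁ * s₂ * ((P - ‖x + y‖) * (P + ‖x + y‖)) := by
    linear_combination (-2) * hcos - (s₁ * s₂) * hP + (s₁ * s₂) * hE -
      2 * (‖x‖ * ‖y‖) * (s₂ ^ 2 * hsq₁ + hsq₂)
  have hprod : s₁ * s₂ * ((P - ‖x + y‖) * (P + ‖x + y‖)) ≤ |P - ‖x + y‖| * (2 * (‖x‖ + ‖y‖)) :=
    calc s₁ * s₂ * ((P - ‖x + y‖) * (P + ‖x + y‖))
        ≤ |s₁ * s₂ * ((P - ‖x + y‖) * (P + ‖x + y‖))| := le_abs_self _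
      _ = |P - ‖x + y‖| * (P + ‖x + y‖) := by
          rw [abs_mul, abs_mul, h₁, h₂, one_mul, one_mul, abs_mul,
            abs_of_nonneg (by positivity : 0 ≤ P + ‖x + y‖)]
      _ ≤ |P - ‖x + y‖| * (2 * (‖x‖ + ‖y‖)) := by gcongr; linarith
  linarith

end InnerProductSpace

lemma abs_abs_add_sub_le (a b e t l : ℝ) :
    |(|a + b| - e)| ≤ |(|t + l| - e)| + |-t + a| + |-l + b| :=
  calc |(|a + b| - e)| ≤ |(|a + b| - |t + l|)| + |(|t + l| - e)| := abs_sub_le _ |t + l| _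
    _ ≤ |(a + b) - (t + l)| + |(|t + l| - e)| := by
        linarith [abs_abs_sub_abs_le_abs_sub (a + b) (t + l)]
    _ ≤ |(|t + l| - e)| + |-t + a| + |-l + b| := by
        rw [show (a + b) - (t + l) = (-t + a) + (-l + b) by ring]
        linarith [abs_add_le (-t + a) (-l + b)]

lemma min_mul_sq_le_of_mul_one_sub_cos_le {θ A B W : ℝ} (hθ : |θ| ≤ π) (hA : 0 < A) (hB : 0 < B)
    (hW : 0 ≤ W) (h : A * B * (1 - cos θ) ≤ (A + B) * W) : min A B * θ ^ 2 ≤ π ^ 2 * W := by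
  have hAB : 0 < A * B := mul_pos hA hB
  have hm : 0 ≤ min A B := le_min hA.le hB.le
  have hcos : A * B * (2 / π ^ 2 * θ ^ 2) ≤ (A + B) * W :=
    (mul_le_mul_of_nonneg_left (by linarith [cos_le_one_sub_mul_cos_sq hθ]) hAB.le).trans h
  have hmin : min A B * (A + B) ≤ 2 * (A * B) := by
    nlinarith [min_le_left A B, min_le_right A B]
  refine le_of_mul_le_mul_left ?_ hAB
  calc A * B * (min A B * θ ^ 2) = π ^ 2 / 2 * min A B * (A * B * (2 / π ^ 2 * θ ^ 2)) := by
        field_simp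
    _ ≤ π ^ 2 / 2 * min A B * ((A + B) * W) := by gcongr
    _ = π ^ 2 / 2 * W * (min A B * (A + B)) := by ring
    _ ≤ π ^ 2 / 2 * W * (2 * (A * B)) := by gcongr
    _ = A * B * (π ^ 2 * W) := by ring

lemma sq_le_of_mul_one_sub_cos_le {θ A B W : ℝ} (hθ : |θ| ≤ π) (hA : 0 < A) (hB : 0 < B)
    (hW : 1 ≤ W) (h : A * B * (1 - cos θ) ≤ (A + B) * W) :
    θ ^ 2 ≤ 2 * π ^ 2 * min 1 (W / min (jbR A) (jbR B)) := by
  have hθπ : θ ^ 2 ≤ π ^ 2 := sq_le_sq.mpr (by rwa [abs_of_pos pi_pos])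
  have hmθ := min_mul_sq_le_of_mul_one_sub_cos_le hθ hA hB (by linarith) h
  have hM : min (jbR A) (jbR B) ≤ 1 + min A B := by
    rcases min_choice A B with hm | hm <;> rw [hm]
    · exact (min_le_left _ _).trans (jbR_le_one_add hA.le)
    · exact (min_le_right _ _).trans (jbR_le_one_add hB.le)
  have hM0 : 0 < min (jbR A) (jbR B) :=
    lt_min (zero_lt_one.trans_le (one_le_jbR A)) (zero_lt_one.trans_le (one_le_jbR B))
  rw [mul_min_of_nonneg _ _ (by positivity), mul_one, mul_div_assoc']
  refine le_min (by linarith [sq_nonneg π]) ?_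
  rw [le_div_iff₀ hM0]
  calc θ ^ 2 * min (jbR A) (jbR B) ≤ θ ^ 2 * (1 + min A B) := by gcongr
    _ ≤ 2 * π ^ 2 * W := by nlinarith [mul_le_mul_of_nonneg_left hW (sq_nonneg π)]

lemma min_one_add_le {a b : ℝ} (ha : 0 ≤ a) (hb : 0 ≤ b) : min 1 (a + b) ≤ min 1 a + min 1 b := by
  simp only [min_def]
  split_ifs <;> linarith

lemma min_one_le_rpow_sq {r α : ℝ} (hr : 0 ≤ r) (hα : α ∈ Set.Icc (0 : ℝ) (1 / 2)) :
    min 1 r ≤ (r ^ α) ^ 2 := by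
  rcases le_total 1 r with h | h
  · exact (min_le_left _ _).trans (one_le_pow₀ (one_le_rpow h hα.1))
  · rw [min_eq_right h, ← rpow_natCast, ← rpow_mul hr]
    calc r = r ^ (1 : ℝ) := (rpow_one r).symm
      _ ≤ r ^ (α * (2 : ℕ)) := rpow_le_rpow_of_exponent_ge' hr h (mul_nonneg hα.1 (by norm_num))
          (by push_cast; linarith [hα.2])

lemma le_mul_add_rpow_of_sq_le {θ K r₁ r₂ r₃ α β γ : ℝ} (hK : 0 ≤ K)
    (h₁ : 0 ≤ r₁) (h₂ : 0 ≤ r₂) (h₃ : 0 ≤ r₃) (hα : α ∈ Set.Icc (0 : ℝ) (1 / 2))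
    (hβ : β ∈ Set.Icc (0 : ℝ) (1 / 2)) (hγ : γ ∈ Set.Icc (0 : ℝ) (1 / 2))
    (h : θ ^ 2 ≤ K ^ 2 * min 1 (r₁ + r₂ + r₃)) : θ ≤ K * (r₁ ^ α + r₂ ^ β + r₃ ^ γ) := by
  have hu₁ := rpow_nonneg h₁ α
  have hu₂ := rpow_nonneg h₂ β
  have hu₃ := rpow_nonneg h₃ γ
  have hsum : min 1 (r₁ + r₂ + r₃) ≤ (r₁ ^ α + r₂ ^ β + r₃ ^ γ) ^ 2 :=
    calc min 1 (r₁ + r₂ + r₃) ≤ min 1 r₁ + min 1 r₂ + min 1 r₃ := by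
          linarith [min_one_add_le (add_nonneg h₁ h₂) h₃, min_one_add_le h₁ h₂]
      _ ≤ (r₁ ^ α) ^ 2 + (r₂ ^ β) ^ 2 + (r₃ ^ γ) ^ 2 := by
          gcongr <;> apply min_one_le_rpow_sq <;> assumption
      _ ≤ (r₁ ^ α + r₂ ^ β + r₃ ^ γ) ^ 2 := by
          nlinarith [mul_nonneg hu₁ hu₂, mul_nonneg hu₁ hu₃, mul_nonneg hu₂ hu₃]
  refine le_trans (le_abs_self θ) (abs_le_of_sq_le_sq ?_ (by positivity))
  calc θ ^ 2 ≤ K ^ 2 * min 1 (r₁ + r₂ + r₃) := h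
    _ ≤ K ^ 2 * (r₁ ^ α + r₂ ^ β + r₃ ^ γ) ^ 2 := by gcongr
    _ = (K * (r₁ ^ α + r₂ ^ β + r₃ ^ γ)) ^ 2 := by ring

theorem stmt13 (α β γ : ℝ) (hα : α ∈ Set.Icc (0 : ℝ) (1 / 2))
    (hβ : β ∈ Set.Icc (0 : ℝ) (1 / 2)) (hγ : γ ∈ Set.Icc (0 : ℝ) (1 / 2)) :
    ∃ C : ℝ, 0 < C ∧
      ∀ s₁ s₂ : ℝ, (s₁ = 1 ∨ s₁ = -1) → (s₂ = 1 ∨ s₂ = -1) →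
      ∀ (τ lam : ℝ) (ξ η : EuclideanSpace ℝ (Fin 3)), ξ ≠ 0 → η ≠ 0 →
        InnerProductGeometry.angle (s₁ • ξ) (s₂ • η) ≤
          C * ((jbR (|τ + lam| - ‖ξ + η‖) / min (jb ξ) (jb η)) ^ α +
               (jbR (-τ + s₁ * ‖ξ‖) / min (jb ξ) (jb η)) ^ β +
               (jbR (-lam + s₂ * ‖η‖) / min (jb ξ) (jb η)) ^ γ) := by
  refine ⟨√2 * π, by positivity, ?_⟩
  intro s₁ s₂ hs₁ hs₂ τ lam ξ η hξ hη
  have habs : ∀ s : ℝ, (s = 1 ∨ s = -1) → |s| = 1 := by rintro s (rfl | rfl) <;> norm_num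
  have hW : |(|s₁ * ‖ξ‖ + s₂ * ‖η‖| - ‖ξ + η‖)| ≤
      jbR (|τ + lam| - ‖ξ + η‖) + jbR (-τ + s₁ * ‖ξ‖) + jbR (-lam + s₂ * ‖η‖) :=
    (abs_abs_add_sub_le _ _ _ τ lam).trans (by gcongr <;> exact abs_le_jbR _)
  have hcos := (norm_mul_norm_mul_one_sub_cos_angle_smul_le (habs s₁ hs₁) (habs s₂ hs₂) ξ η).trans
    (mul_le_mul_of_nonneg_left hW (by positivity))
  have hθ : |angle (s₁ • ξ) (s₂ • η)| ≤ π := by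
    rw [abs_of_nonneg (angle_nonneg _ _)]
    exact angle_le_pi _ _
  have hsq := sq_le_of_mul_one_sub_cos_le hθ (norm_pos_iff.2 hξ) (norm_pos_iff.2 hη)
    (by linarith [one_le_jbR (|τ + lam| - ‖ξ + η‖), one_le_jbR (-τ + s₁ * ‖ξ‖),
      one_le_jbR (-lam + s₂ * ‖η‖)]) hcos
  rw [← jb_eq_jbR_norm, ← jb_eq_jbR_norm, add_div, add_div] at hsq
  have hr (x : ℝ) : 0 ≤ jbR x / min (jb ξ) (jb η) :=
    div_nonneg (zero_le_one.trans (one_le_jbR x)) (le_min (sqrt_nonneg _) (sqrt_nonneg _))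
  refine le_mul_add_rpow_of_sq_le (by positivity) (hr _) (hr _) (hr _) hα hβ hγ ?_
  rwa [mul_pow, sq_sqrt zero_le_two]
end
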